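/- arXiv:math/0405305 — 3 statements merged into one kernel-verified Lean document; each statement's English description precedes it below -/
import Mathlib

section
/- With π and π̄ as in the context, the elements 2·(c₂ : A)·s and (4·c₂·(c₃² − c₄²·d) : A)·η both lie in the ℤ-subalgebra Algebra.adjoin ℤ {π, π̄} of A. In particular ℤ[2c₂·s, 4c₂(c₃² − c₄²d)·η] ⊆ ℤ[π, π̄]. -/
/-- Proof of Proposition 6.1: `ℤ[2c₂·√d, 4c₂(c₃² − c₄²d)·η] ⊆ ℤ[π, π̄]`. -/
theorem adjoin_contains_sqrtd_eta_multiples {A : Type*} [CommRing A]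
    (d c₁ c₂ c₃ c₄ : ℤ) (s η : A) (hs : s ^ 2 = (d : A))
    (π πb : A)
    (hπ : π = (c₁ : A) + (c₂ : A) * s + ((c₃ : A) + (c₄ : A) * s) * η)
    (hπb : πb = (c₁ : A) + (c₂ : A) * s - ((c₃ : A) + (c₄ : A) * s) * η) :
    2 * (c₂ : A) * s ∈ Algebra.adjoin ℤ {π, πb} ∧
    ((4 * c₂ * (c₃ ^ 2 - c₄ ^ 2 * d) : ℤ) : A) * η ∈ Algebra.adjoin ℤ {π, πb} := by
  have hπm : π ∈ Algebra.adjoin ℤ {π, πb} := Algebra.subset_adjoin (by simp)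
  have hπbm : πb ∈ Algebra.adjoin ℤ {π, πb} := Algebra.subset_adjoin (by simp)
  have h1 : 2 * (c₂ : A) * s ∈ Algebra.adjoin ℤ {π, πb} := by
    have e : 2 * (c₂ : A) * s = π + πb - ((2 * c₁ : ℤ) : A) := by
      subst hπ hπb; push_cast; ring
    rw [e]
    exact sub_mem (add_mem hπm hπbm) (Subalgebra.intCast_mem _ _)
  refine ⟨h1, ?_⟩
  have h2 : ((4 * c₂ * (c₃ ^ 2 - c₄ ^ 2 * d) : ℤ) : A) * η
      = (π - πb) * (((2 * c₂ * c₃ : ℤ) : A) - (c₄ : A) * (2 * (c₂ : A) * s)) := by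
    subst hπ hπb; push_cast
    linear_combination (4 * (c₂ : A) * (c₄ : A) ^ 2 * η) * hs
  rw [h2]
  exact mul_mem (sub_mem hπm hπbm)
    (sub_mem (Subalgebra.intCast_mem _ _) (mul_mem (Subalgebra.intCast_mem _ _) h1))
end

section
/- Let p be a rational prime that is unramified in K. Suppose there exists a prime ideal 𝔭 of O_{K₀} lying above p (i.e. with p ∈ 𝔭) such that the extended ideal 𝔭·O_K is a prime ideal of O_K (𝔭 does not split in K). Then there is no element π ∈ O_K with π · σ(π) = p. -/
open NumberField

/-- Case 1 in the proof of Proposition 4.1: if some prime `𝔭` of `K₀` above `p` is inert in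
the quadratic extension `K/K₀`, then the relative norm equation `π·σ(π) = p` has no solution
in `O_K`. -/
theorem no_relative_norm_solution_of_inert
    (K₀ K : Type*) [Field K₀] [Field K] [NumberField K₀] [NumberField K]
    [Algebra K₀ K] (hdeg : Module.finrank K₀ K = 2)
    (σ : K ≃ₐ[K₀] K) (hσ : σ ≠ 1)
    (p : ℕ) (hp : p.Prime)
    (hunram : Squarefree (Ideal.span {(p : 𝓞 K)} : Ideal (𝓞 K)))
    (𝔭 : Ideal (𝓞 K₀)) (h𝔭 : 𝔭.IsPrime)
    (hmem : (p : 𝓞 K₀) ∈ 𝔭)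
    (hinert : (𝔭.map (algebraMap (𝓞 K₀) (𝓞 K))).IsPrime) :
    ¬ ∃ π : 𝓞 K, (π : K) * σ (π : K) = (p : K) := by
  rintro ⟨π, hπ⟩
  set τ : 𝓞 K ≃ₐ[𝓞 K₀] 𝓞 K := galRestrict (𝓞 K₀) K₀ K (𝓞 K) σ with hτdef
  set P : Ideal (𝓞 K) := 𝔭.map (algebraMap (𝓞 K₀) (𝓞 K)) with hPdef
  -- π * τ π = p in 𝓞 K
  have hmul : π * τ π = (p : 𝓞 K) := by
    apply RingOfIntegers.ext
    show (algebraMap (𝓞 K) K) (π * τ π) = _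
    rw [map_mul, hτdef, algebraMap_galRestrict_apply]
    rw [show (algebraMap (𝓞 K) K) π = (π : K) from rfl, hπ]
    simp
  -- p ∈ P
  have hpP : (p : 𝓞 K) ∈ P := by
    have := Ideal.mem_map_of_mem (algebraMap (𝓞 K₀) (𝓞 K)) hmem
    simpa using this
  -- τ maps P into P, and τ.symm too
  have hmap : ∀ x ∈ P, τ x ∈ P := by
    intro x hx
    have h1 : P.map (τ : 𝓞 K →+* 𝓞 K) = P := by
      rw [hPdef, Ideal.map_map]
      congr 1
      ext a
      simp
    rw [← h1]
    exact Ideal.mem_map_of_mem _ hx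
  have hmapsymm : ∀ x ∈ P, τ.symm x ∈ P := by
    intro x hx
    have h1 : P.map (τ.symm : 𝓞 K →+* 𝓞 K) = P := by
      rw [hPdef, Ideal.map_map]
      congr 1
      ext a
      simp
    rw [← h1]
    exact Ideal.mem_map_of_mem _ hx
  -- both πและ τ π are in P
  have hboth : π ∈ P ∧ τ π ∈ P := by
    have := hinert.mem_or_mem (by rwa [hmul])
    rcases this with h | h
    · exact ⟨h, hmap _ h⟩
    · refine ⟨?_, h⟩
      have := hmapsymm _ h
      simpa using this
  -- p ∈ P^2, so P*P ∣ span p, contradicting squarefreeness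
  have hPP : (p : 𝓞 K) ∈ P * P := by
    rw [← hmul]; exact Ideal.mul_mem_mul hboth.1 hboth.2
  have hdvd : P * P ∣ Ideal.span {(p : 𝓞 K)} := by
    rw [Ideal.dvd_iff_le, Ideal.span_le, Set.singleton_subset_iff]
    exact hPP
  have := hunram P hdvd
  rw [Ideal.isUnit_iff] at this
  exact hinert.ne_top this
end

section
/- Assume in addition that K₀ has degree 2 over ℚ (so K is a quartic field). Let p be a rational prime that is unramified in K. Then the number of nonzero ideals I of O_K with relNorm I = p·O_{K₀} is equal to 0, 2, or 4. -/
/-!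
Let `τ` be the restriction of `σ` to `𝓞 K`, so that the norm of `x ∈ 𝓞 K` is `x · τ x`. This
upgrades to ideals: `relNorm I · 𝓞 K = I · τ I`, where `⊇` holds because `r · τ y` is a root of a
monic quadratic whose coefficients are norms from `I`, and ideals of a Dedekind domain are
integrally closed. As `𝓞 K` is faithfully flat over `𝓞 K₀`, the solutions are the ideals `I` with
`I · τ I = p 𝓞 K`. If `I₀` is one, then `p 𝓞 K = I₀ · τ I₀` is a product of `2n` distinct primes
(`p` is unramified) with `2n ≤ [K : ℚ] = 4`, and the solutions are exactly the ideals obtained from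
`I₀` by replacing some of its `n` prime factors with their conjugates: there are `2 ^ n` of them.
-/

open NumberField

namespace Multiset

variable {α : Type*} {f : α → α}

theorem mem_map_of_involutive (hf : Function.Involutive f) {s : Multiset α} {z : α} :
    z ∈ s.map f ↔ f z ∈ s := by
  conv_lhs => rw [← hf z]
  exact mem_map_of_injective hf.injective

theorem apply_notMem_of_nodup_add_map (hf : Function.Involutive f) {s : Multiset α}
    (hnd : (s + s.map f).Nodup) {z : α} (hz : z ∈ s) : f z ∉ s := fun hfz =>
  disjoint_left.mp (nodup_add.mp hnd).2.2 hz ((mem_map_of_involutive hf).mpr hfz)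

section Swap

variable [DecidableEq α] {s₀ : Multiset α}

theorem add_map_tsub_add_map (hf : Function.Involutive f) {t : Multiset α} (ht : t ≤ s₀) :
    t + (s₀ - t).map f + (t + (s₀ - t).map f).map f = s₀ + s₀.map f := by
  conv_rhs => rw [← add_tsub_cancel_of_le ht, map_add]
  rw [map_add, map_map, hf.comp_self, map_id]
  ac_rfl

theorem filter_mem_add_map_tsub (hf : Function.Involutive f) (hnd : (s₀ + s₀.map f).Nodup)
    {t : Multiset α} (ht : t ≤ s₀) : (t + (s₀ - t).map f).filter (· ∈ s₀) = t := by
  rw [filter_add, filter_eq_self.mpr fun z hz => mem_of_le ht hz,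
    filter_eq_nil.mpr fun z hz hz₀ => ?_, add_zero]
  have hfz : f z ∈ s₀ := mem_of_le tsub_le_self ((mem_map_of_involutive hf).mp hz)
  exact apply_notMem_of_nodup_add_map hf hnd hz₀ hfz

theorem filter_mem_add_map_tsub_filter_mem (hf : Function.Involutive f)
    (hnd : (s₀ + s₀.map f).Nodup) {s : Multiset α} (hs : s + s.map f = s₀ + s₀.map f) :
    s.filter (· ∈ s₀) ≤ s₀ ∧ s.filter (· ∈ s₀) + (s₀ - s.filter (· ∈ s₀)).map f = s := by
  have hs₀ : s₀.Nodup := nodup_of_le (le_add_right _ _) hnd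
  have hsnd : s.Nodup := nodup_of_le (le_add_right _ _) (hs ▸ hnd)
  have ht : s.filter (· ∈ s₀) ≤ s₀ :=
    (le_iff_subset (hsnd.filter _)).mpr fun z hz => (mem_filter.mp hz).2
  refine ⟨ht, (Nodup.ext ?_ hsnd).mpr fun z => ?_⟩
  · exact nodup_of_le (le_add_right _ _) (add_map_tsub_add_map hf ht ▸ hnd)
  have hM : z ∈ s ∨ f z ∈ s ↔ z ∈ s₀ ∨ f z ∈ s₀ := by
    simpa only [mem_add, mem_map_of_involutive hf] using Iff.of_eq (congrArg (z ∈ ·) hs)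
  have h₀ := apply_notMem_of_nodup_add_map hf hnd (z := z)
  have h₁ := apply_notMem_of_nodup_add_map hf (hs ▸ hnd) (z := z)
  simp only [mem_add, mem_map_of_involutive hf, mem_sub_of_nodup hs₀, mem_filter]
  tauto

end Swap

theorem ncard_setOf_add_map_eq_add_map (hf : Function.Involutive f) {s₀ : Multiset α}
    (hnd : (s₀ + s₀.map f).Nodup) :
    {s | s + s.map f = s₀ + s₀.map f}.ncard = 2 ^ card s₀ := by
  classical
  have hs₀ : s₀.Nodup := nodup_of_le (le_add_right _ _) hnd
  set swap : Multiset α → Multiset α := fun t => t + (s₀ - t).map f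
  have hsols : {s | s + s.map f = s₀ + s₀.map f} = swap '' {t | t ≤ s₀} := by
    ext s
    refine ⟨fun hs => ⟨_, filter_mem_add_map_tsub_filter_mem hf hnd hs⟩, ?_⟩
    rintro ⟨t, ht, rfl⟩
    exact add_map_tsub_add_map hf ht
  have hinj : Set.InjOn swap {t | t ≤ s₀} := fun t₁ h₁ t₂ h₂ h => by
    rw [← filter_mem_add_map_tsub hf hnd h₁, ← filter_mem_add_map_tsub hf hnd h₂]
    exact congrArg (filter (· ∈ s₀)) h
  have hsub : {t | t ≤ s₀} = (s₀.powerset.toFinset : Set (Multiset α)) := by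
    ext t
    simp
  rw [hsols, hinj.ncard_image, hsub, Set.ncard_coe_finset,
    toFinset_card_of_nodup (nodup_powerset.mpr hs₀), card_powerset]

end Multiset

namespace UniqueFactorizationMonoid

variable {α β : Type*} [CommMonoidWithZero α] [NormalizationMonoid α]
  [UniqueFactorizationMonoid α] [Subsingleton αˣ]

theorem normalizedFactors_map_mulEquiv [CommMonoidWithZero β] [NormalizationMonoid β]
    [UniqueFactorizationMonoid β] [Subsingleton βˣ] (φ : α ≃* β) (a : α) :
    normalizedFactors (φ a) = (normalizedFactors a).map φ := by
  rcases eq_or_ne a 0 with rfl | ha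
  · simp
  conv_lhs => rw [← associated_iff_eq.mp (prod_normalizedFactors ha), map_multiset_prod]
  refine normalizedFactors_prod_of_prime fun q hq => ?_
  obtain ⟨r, hr, rfl⟩ := Multiset.mem_map.mp hq
  exact (MulEquiv.prime_iff φ).mpr (prime_of_normalized_factor r hr)

theorem ncard_setOf_mul_map_eq (φ : α ≃* α) {c : α} (hc : c ≠ 0) :
    {a | a * φ a = c}.ncard = {s | s + s.map φ = normalizedFactors c}.ncard := by
  have hprime : ∀ s ∈ {s | s + s.map φ = normalizedFactors c}, ∀ q ∈ s, Prime q :=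
    fun s hs q hq => prime_of_normalized_factor q (hs ▸ Multiset.mem_add.mpr (Or.inl hq))
  have hinj : Set.InjOn Multiset.prod {s | s + s.map φ = normalizedFactors c} :=
    fun s hs t ht h => by
      rw [← normalizedFactors_prod_of_prime (hprime s hs), h,
        normalizedFactors_prod_of_prime (hprime t ht)]
  rw [← hinj.ncard_image]
  congr
  ext a
  refine ⟨fun ha => ?_, ?_⟩
  · have ha0 : a ≠ 0 := by
      rintro rfl
      exact hc (by simpa using ha.symm)
    refine ⟨normalizedFactors a, ?_, associated_iff_eq.mp (prod_normalizedFactors ha0)⟩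
    change _ = _
    rw [← normalizedFactors_map_mulEquiv, ← normalizedFactors_mul ha0 (by simpa using ha0), ha]
  · rintro ⟨s, hs : s + s.map φ = normalizedFactors c, rfl⟩
    rw [map_multiset_prod, ← Multiset.prod_add, hs,
      associated_iff_eq.mp (prod_normalizedFactors hc)]

end UniqueFactorizationMonoid

namespace Ideal

theorem map_involutive {S E : Type*} [CommRing S] [EquivLike E S S] [RingEquivClass E S S]
    {τ : E} (hτ : Function.Involutive τ) : Function.Involutive (map τ : Ideal S → Ideal S) :=
  fun I => by
    ext x
    simp only [mem_map_of_equiv]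
    exact ⟨fun ⟨_, ⟨y, hy, rfl⟩, hx⟩ => hx ▸ (hτ y).symm ▸ hy,
      fun hx => ⟨τ x, ⟨x, hx, rfl⟩, hτ x⟩⟩

theorem mem_of_add_mem_of_mul_mem_sq {R : Type*} [CommRing R] [IsDedekindDomain R]
    {J : Ideal R} {u v : R} (huv : u + v ∈ J) (huv' : u * v ∈ J ^ 2) : u ∈ J := by
  rcases eq_or_ne u 0 with rfl | hu
  · exact J.zero_mem
  -- `C = J + (u)` satisfies `C * C ≤ J * C`; cancelling `C` gives `J ∣ C`
  have huC : u ∈ J ⊔ span {u} := mem_sup_right (mem_span_singleton_self u)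
  have hsq : u * u ∈ J * (J ⊔ span {u}) := by
    rw [show u * u = (u + v) * u - u * v by ring]
    exact sub_mem (mul_mem_mul huv huC) (mul_mono_right le_sup_left (pow_two J ▸ huv'))
  have hCC : (J ⊔ span {u}) * (J ⊔ span {u}) ≤ J * (J ⊔ span {u}) := by
    rw [sup_mul J (span {u}), mul_sup (span {u}) J (span {u}), mul_comm (span {u}) J,
      span_singleton_mul_span_singleton]
    exact sup_le le_rfl
      (sup_le (mul_mono_right le_sup_right) ((span_singleton_le_iff_mem _).mpr hsq))
  have hC : J ⊔ span {u} ≠ ⊥ := fun h => hu ((Submodule.eq_bot_iff _).mp h u huC)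
  exact le_of_dvd ((mul_dvd_mul_iff_right hC).mp (dvd_iff_le.mpr hCC)) huC

theorem ncard_setOf_mul_map_eq {S E : Type*} [CommRing S] [IsDedekindDomain S] [EquivLike E S S]
    [RingEquivClass E S S] {τ : E} (hτ : Function.Involutive τ) {P : Ideal S} (hP : P ≠ ⊥) :
    {I | I * I.map τ = P}.ncard =
      {s | s + s.map (map τ) = UniqueFactorizationMonoid.normalizedFactors P}.ncard :=
  UniqueFactorizationMonoid.ncard_setOf_mul_map_eq
    (MulEquiv.ofBijective (mapHom (τ : S →+* S)) (map_involutive hτ).bijective) hP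

section RelNorm

variable {R S : Type*} [CommRing R] [IsDedekindDomain R] [CommRing S] [IsDedekindDomain S]
  [Algebra R S] [Module.Finite R S] [Module.IsTorsionFree R S]

theorem map_relNorm_eq_mul_map (τ : S ≃ₐ[R] S)
    (hτ : ∀ x, algebraMap R S (Algebra.intNorm R S x) = x * τ x) (I : Ideal S) :
    (relNorm R I).map (algebraMap R S) = I * I.map τ := by
  have hnorm : ∀ x ∈ I,
      algebraMap R S (Algebra.intNorm R S x) ∈ (relNorm R I).map (algebraMap R S) :=
    fun x hx => mem_map_of_mem _ (intNorm_mem_spanNorm R hx)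
  refine le_antisymm ?_ (mul_le.mpr fun r hr s hs => ?_)
  · rw [relNorm_apply, map_span, span_le]
    rintro _ ⟨_, ⟨x, hx, rfl⟩, rfl⟩
    rw [hτ]
    exact mul_mem_mul hx (mem_map_of_mem τ hx)
  obtain ⟨y, hy, rfl⟩ := (mem_map_iff_of_surjective τ τ.surjective).mp hs
  -- `r * τ y` and `y * τ r` have their sum and product in the images of norms from `I`
  refine mem_of_add_mem_of_mul_mem_sq (v := y * τ r) ?_ ?_
  · have h : r * τ y + y * τ r = algebraMap R S (Algebra.intNorm R S (r + y)) -
        algebraMap R S (Algebra.intNorm R S r) - algebraMap R S (Algebra.intNorm R S y) := by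
      rw [hτ, hτ, hτ, map_add]
      ring
    rw [h]
    exact sub_mem (sub_mem (hnorm _ (add_mem hr hy)) (hnorm r hr)) (hnorm y hy)
  · have h : r * τ y * (y * τ r) = algebraMap R S (Algebra.intNorm R S (r * y)) := by
      rw [hτ, map_mul]
      ring
    rw [h, ← Ideal.map_pow, ← map_pow]
    exact mem_map_of_mem _ (intNorm_mem_spanNorm R (pow_two I ▸ mul_mem_mul hr hy))

theorem relNorm_eq_iff_mul_map_eq (τ : S ≃ₐ[R] S)
    (hτ : ∀ x, algebraMap R S (Algebra.intNorm R S x) = x * τ x) {I : Ideal S} {J : Ideal R} :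
    relNorm R I = J ↔ I * I.map τ = J.map (algebraMap R S) := by
  rw [← map_relNorm_eq_mul_map τ hτ, map_injective_of_faithfullyFlat.eq_iff]

theorem setOf_ne_bot_and_relNorm_eq (τ : S ≃ₐ[R] S)
    (hτ : ∀ x, algebraMap R S (Algebra.intNorm R S x) = x * τ x) {J : Ideal R} (hJ : J ≠ ⊥) :
    {I : Ideal S | I ≠ ⊥ ∧ relNorm R I = J} = {I | I * I.map τ = J.map (algebraMap R S)} := by
  ext I
  refine (and_iff_right_of_imp fun h hI => hJ ?_).trans (relNorm_eq_iff_mul_map_eq τ hτ)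
  rw [← h, hI, relNorm_bot]

end RelNorm

section AbsNorm

open UniqueFactorizationMonoid ArithmeticFunction
open scoped ArithmeticFunction.Omega

variable {S : Type*} [CommRing S] [IsDedekindDomain S] [Module.Free ℤ S] [Module.Finite ℤ S]

theorem card_normalizedFactors_le_cardFactors_absNorm (I : Ideal S) :
    Multiset.card (normalizedFactors I) ≤ Ω (absNorm I) := by
  rcases eq_or_ne I ⊥ with rfl | hI
  · rw [← zero_eq_bot, normalizedFactors_zero, Multiset.card_zero]
    exact Nat.zero_le _
  have hprod : absNorm I = ((normalizedFactors I).map absNorm).prod := by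
    rw [← map_multiset_prod, prod_normalizedFactors_eq_self hI]
  have hfactor : ∀ Q ∈ normalizedFactors I, 1 ≤ Ω (absNorm Q) := fun Q hQ => by
    rw [Nat.one_le_iff_ne_zero, Ne, cardFactors_eq_zero_iff_eq_zero_or_one, absNorm_eq_zero_iff,
      absNorm_eq_one_iff, ← one_eq_top, ← isUnit_iff_eq_one]
    exact not_or.mpr
      ⟨ne_zero_of_mem_normalizedFactors hQ, (prime_of_normalized_factor Q hQ).not_isUnit⟩
  rw [hprod, cardFactors_multiset_prod (hprod ▸ absNorm_eq_zero_iff.not.mpr hI),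
    Multiset.map_map]
  simpa using Multiset.card_nsmul_le_sum (s := (normalizedFactors I).map (Ω ∘ absNorm)) (a := 1)
    (by simpa using hfactor)

theorem card_normalizedFactors_span_natCast_le {p : ℕ} (hp : p.Prime) :
    Multiset.card (normalizedFactors (span {(p : S)})) ≤ Module.finrank ℤ S := by
  have h := card_normalizedFactors_le_cardFactors_absNorm (span {(p : S)})
  rwa [absNorm_span_natCast, cardFactors_apply_prime_pow hp] at h

theorem card_normalizedFactors_span_natCast_pos {p : ℕ} (hp : p.Prime) :
    0 < Multiset.card (normalizedFactors (span {(p : S)})) := by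
  have hne : span {(p : S)} ≠ ⊥ := by
    rw [Ne, ← absNorm_eq_zero_iff, absNorm_span_natCast]
    exact pow_ne_zero _ hp.ne_zero
  rw [Multiset.card_pos, ← pos_iff_ne_zero, normalizedFactors_pos _ hne, isUnit_iff,
    ← absNorm_eq_one_iff, absNorm_span_natCast]
  exact (Nat.one_lt_pow Module.finrank_pos.ne' hp.one_lt).ne'

end AbsNorm

end Ideal

namespace Algebra.IsQuadraticExtension

variable {F E : Type*} [Field F] [Field E] [Algebra F E] [IsQuadraticExtension F E]
  {σ : E ≃ₐ[F] E}

theorem card_algEquiv_eq_two (hσ : σ ≠ 1) : Fintype.card (E ≃ₐ[F] E) = 2 := by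
  have : Nontrivial (E ≃ₐ[F] E) := ⟨⟨σ, 1, hσ⟩⟩
  have hle : Fintype.card (E ≃ₐ[F] E) ≤ 2 := finrank_eq_two F E ▸ AlgEquiv.card_le
  have hgt := Fintype.one_lt_card (α := E ≃ₐ[F] E)
  omega

theorem isGalois_of_ne_one (hσ : σ ≠ 1) : IsGalois F E :=
  IsGalois.of_card_aut_eq_finrank F E <| by
    rw [Nat.card_eq_fintype_card, card_algEquiv_eq_two hσ, finrank_eq_two]

theorem mul_self_eq_one (hσ : σ ≠ 1) : σ * σ = 1 := by
  rw [← sq, ← card_algEquiv_eq_two hσ, pow_card_eq_one]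

theorem algebraMap_norm_eq_mul (hσ : σ ≠ 1) (y : E) :
    algebraMap F E (Algebra.norm F y) = y * σ y := by
  classical
  have := isGalois_of_ne_one hσ
  have huniv : (Finset.univ : Finset (E ≃ₐ[F] E)) = {1, σ} := by
    refine (Finset.eq_univ_of_card _ ?_).symm
    rw [Finset.card_pair (Ne.symm hσ), card_algEquiv_eq_two hσ]
  rw [Algebra.norm_eq_prod_automorphisms, huniv, Finset.prod_pair (Ne.symm hσ),
    AlgEquiv.one_apply]

end Algebra.IsQuadraticExtension

namespace NumberField.RingOfIntegers

variable {K₀ K : Type*} [Field K₀] [Field K] [Algebra K₀ K] [Algebra.IsQuadraticExtension K₀ K]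
  {σ : K ≃ₐ[K₀] K}

theorem algebraMap_intNorm_eq_mul_mapAlgEquiv [NumberField K₀] [NumberField K] (hσ : σ ≠ 1)
    (x : 𝓞 K) :
    algebraMap (𝓞 K₀) (𝓞 K) (Algebra.intNorm (𝓞 K₀) (𝓞 K) x) = x * mapAlgEquiv σ x := by
  apply coe_injective
  change algebraMap K₀ K (algebraMap (𝓞 K₀) K₀ _) = _
  rw [Algebra.algebraMap_intNorm (L := K), Algebra.IsQuadraticExtension.algebraMap_norm_eq_mul hσ]
  rfl

theorem mapAlgEquiv_involutive (hσ : σ ≠ 1) : Function.Involutive (mapAlgEquiv σ) := fun x =>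
  coe_injective (congrArg (· (x : K)) (Algebra.IsQuadraticExtension.mul_self_eq_one hσ))

end NumberField.RingOfIntegers

theorem card_ideals_of_relNorm_p_eq_zero_two_or_four_general
    (K₀ K : Type*) [Field K₀] [Field K] [NumberField K₀] [NumberField K]
    [Algebra K₀ K] (hdeg : Module.finrank K₀ K = 2)
    (hdeg₀ : Module.finrank ℚ K₀ = 2)
    (σ : K ≃ₐ[K₀] K) (hσ : σ ≠ 1)
    (p : ℕ) (hp : p.Prime)
    (hunram : Squarefree (Ideal.span {(p : 𝓞 K)} : Ideal (𝓞 K))) :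
    {I : Ideal (𝓞 K) | I ≠ ⊥ ∧ Ideal.relNorm (𝓞 K₀) I = Ideal.span {(p : 𝓞 K₀)}}.ncard = 0 ∨
    {I : Ideal (𝓞 K) | I ≠ ⊥ ∧ Ideal.relNorm (𝓞 K₀) I = Ideal.span {(p : 𝓞 K₀)}}.ncard = 2 ∨
    {I : Ideal (𝓞 K) | I ≠ ⊥ ∧ Ideal.relNorm (𝓞 K₀) I = Ideal.span {(p : 𝓞 K₀)}}.ncard = 4 := by
  have : Algebra.IsQuadraticExtension K₀ K := ⟨hdeg⟩
  set τ : 𝓞 K ≃ₐ[𝓞 K₀] 𝓞 K := RingOfIntegers.mapAlgEquiv σ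
  have hτ : Function.Involutive τ := RingOfIntegers.mapAlgEquiv_involutive hσ
  set P := Ideal.span {(p : 𝓞 K)}
  have hP : P ≠ ⊥ := by simpa [P] using hp.ne_zero
  rw [Ideal.setOf_ne_bot_and_relNorm_eq τ (RingOfIntegers.algebraMap_intNorm_eq_mul_mapAlgEquiv hσ)
    (by simpa using hp.ne_zero), Ideal.map_span, Set.image_singleton, map_natCast,
    Ideal.ncard_setOf_mul_map_eq hτ hP]
  rcases Set.eq_empty_or_nonempty
      {s | s + s.map (Ideal.map τ) = UniqueFactorizationMonoid.normalizedFactors P}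
    with h | ⟨s₀, hs₀ : s₀ + s₀.map (Ideal.map τ) = _⟩
  · simp [h]
  have hnd : (s₀ + s₀.map (Ideal.map τ)).Nodup :=
    hs₀ ▸ (UniqueFactorizationMonoid.squarefree_iff_nodup_normalizedFactors hP).mp hunram
  have hrank : Module.finrank ℤ (𝓞 K) = 4 := by
    rw [RingOfIntegers.rank, ← Module.finrank_mul_finrank ℚ K₀ K, hdeg₀, hdeg]
  have hle := hs₀ ▸ hrank ▸ Ideal.card_normalizedFactors_span_natCast_le (S := 𝓞 K) hp
  have hpos := hs₀ ▸ Ideal.card_normalizedFactors_span_natCast_pos (S := 𝓞 K) hp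
  rw [Multiset.card_add, Multiset.card_map] at hle hpos
  rw [← hs₀, Multiset.ncard_setOf_add_map_eq_add_map (Ideal.map_involutive hτ) hnd]
  obtain h | h : Multiset.card s₀ = 1 ∨ Multiset.card s₀ = 2 := by omega
  all_goals simp [h]

/-- Proposition 4.1(A), ideal-theoretic form: for `K` a quartic field that is a quadratic
extension of a quadratic field `K₀`, and `p` a rational prime unramified in `K`, the number
of nonzero ideals of `O_K` with relative norm `p·O_{K₀}` is 0, 2 or 4. -/
theorem card_ideals_of_relNorm_p_eq_zero_two_or_four
    (K₀ K : Type*) [Field K₀] [Field K] [NumberField K₀] [NumberField K]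
    [Algebra K₀ K] (hdeg : Module.finrank K₀ K = 2)
    (hdeg₀ : Module.finrank ℚ K₀ = 2)
    [Module.Finite (𝓞 K₀) (𝓞 K)] [Module.Free (𝓞 K₀) (𝓞 K)]
    (σ : K ≃ₐ[K₀] K) (hσ : σ ≠ 1)
    (p : ℕ) (hp : p.Prime)
    (hunram : Squarefree (Ideal.span {(p : 𝓞 K)} : Ideal (𝓞 K))) :
    {I : Ideal (𝓞 K) | I ≠ ⊥ ∧ Ideal.relNorm (𝓞 K₀) I = Ideal.span {(p : 𝓞 K₀)}}.ncard = 0 ∨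
    {I : Ideal (𝓞 K) | I ≠ ⊥ ∧ Ideal.relNorm (𝓞 K₀) I = Ideal.span {(p : 𝓞 K₀)}}.ncard = 2 ∨
    {I : Ideal (𝓞 K) | I ≠ ⊥ ∧ Ideal.relNorm (𝓞 K₀) I = Ideal.span {(p : 𝓞 K₀)}}.ncard = 4 :=
  card_ideals_of_relNorm_p_eq_zero_two_or_four_general K₀ K hdeg hdeg₀ σ hσ p hp hunram
end
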